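/- arXiv:2510.02004 — 4 statements merged into one kernel-verified Lean document; each statement's English description precedes it below -/
import Mathlib

section
/- For the power-fractional generating function f(s) = 1 - [(1-s)^{-α} + 1]^{-1/α} with α ∈ (0,1), the n-fold composition satisfies f_n(s) = 1 - (1-s)/(1 + n(1-s)^α)^{1/α} for all s ∈ [0,1) and all n ≥ 0. -/
open Filter Set

/-- for the critical power-fractional generating function
`f(s) = 1 - ((1-s)^{-α} + 1)^{-1/α}` with `α ∈ (0,1)`, the `n`-fold composition is
`f_n(s) = 1 - (1-s)/(1 + n (1-s)^α)^{1/α}` for all `s ∈ [0,1)` and `n ≥ 0`. -/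
theorem power_fractional_iterate (α : ℝ) (hα0 : 0 < α) (hα1 : α < 1)
    (f : ℝ → ℝ)
    (hf : ∀ s ∈ Set.Ico (0 : ℝ) 1, f s = 1 - ((1 - s) ^ (-α) + 1) ^ (-1 / α))
    (hf1 : f 1 = 1) :
    ∀ n : ℕ, ∀ s ∈ Set.Ico (0 : ℝ) 1,
      f^[n] s = 1 - (1 - s) / (1 + (n : ℝ) * (1 - s) ^ α) ^ (1 / α) := by
  intro n
  induction n with
  | zero =>
    intro s hs
    simp
  | succ n ih =>
    intro s hs
    have hx : 0 < 1 - s := by linarith [hs.2]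
    have ht : 0 < (1 - s) ^ α := Real.rpow_pos_of_pos hx α
    have hd : 0 < 1 + (n : ℝ) * (1 - s) ^ α := by positivity
    have hD : 0 < (1 + (n : ℝ) * (1 - s) ^ α) ^ (1 / α) := Real.rpow_pos_of_pos hd _
    have hD1 : 1 ≤ (1 + (n : ℝ) * (1 - s) ^ α) ^ (1 / α) :=
      Real.one_le_rpow (by nlinarith [ht.le]) (by positivity)
    have hx1 : (1 : ℝ) - s ≤ 1 := by linarith [hs.1]
    have hu : 0 < (1 - s) / (1 + (n : ℝ) * (1 - s) ^ α) ^ (1 / α) := div_pos hx hD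
    have hu1 : (1 - s) / (1 + (n : ℝ) * (1 - s) ^ α) ^ (1 / α) ≤ 1 := by
      rw [div_le_one hD]; linarith
    have hmem : f^[n] s ∈ Set.Ico (0 : ℝ) 1 := by
      rw [ih s hs]
      constructor
      · linarith
      · linarith
    rw [Function.iterate_succ_apply', hf _ hmem, ih s hs]
    rw [show (1 : ℝ) - (1 - (1 - s) / (1 + (n : ℝ) * (1 - s) ^ α) ^ (1 / α))
        = (1 - s) / (1 + (n : ℝ) * (1 - s) ^ α) ^ (1 / α) from by ring]
    have hDa : ((1 + (n : ℝ) * (1 - s) ^ α) ^ (1 / α)) ^ α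
        = 1 + (n : ℝ) * (1 - s) ^ α := by
      rw [← Real.rpow_mul hd.le, one_div, inv_mul_cancel₀ hα0.ne', Real.rpow_one]
    have key : ((1 - s) / (1 + (n : ℝ) * (1 - s) ^ α) ^ (1 / α)) ^ (-α)
        = (1 + (n : ℝ) * (1 - s) ^ α) / (1 - s) ^ α := by
      rw [Real.div_rpow hx.le hD.le, Real.rpow_neg hx.le, Real.rpow_neg hD.le, hDa]
      field_simp
    rw [key]
    rw [show (1 + (n : ℝ) * (1 - s) ^ α) / (1 - s) ^ α + 1
        = (1 + ((n : ℝ) + 1) * (1 - s) ^ α) / (1 - s) ^ α from by field_simp; ring]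
    have hA : 0 < 1 + ((n : ℝ) + 1) * (1 - s) ^ α := by positivity
    have h3 : ((1 + ((n : ℝ) + 1) * (1 - s) ^ α) / (1 - s) ^ α) ^ (-1 / α)
        = (1 - s) / (1 + ((n : ℝ) + 1) * (1 - s) ^ α) ^ (1 / α) := by
      rw [Real.div_rpow hA.le ht.le, neg_div, Real.rpow_neg hA.le, Real.rpow_neg ht.le,
        ← Real.rpow_mul hx.le, mul_one_div, div_self hα0.ne', Real.rpow_one]
      field_simp
    rw [h3]
    push_cast
    ring_nf
end

section
/- For α = 1/2 and the power-fractional offspring generating function f(s) = 1 - [(1-s)^{-1/2} + 1]^{-2}, the infinite product φ(s) = ∏_{n=0}^∞ f_n(s), where f_n is the n-fold composition of f, equals 1 - √(1-s) for all s ∈ [0,1]. -/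
open Filter Set Topology Finset

/-!
With `t = √(1 - s) ∈ [0, 1]`, the map `f` acts on `t` as the Möbius map `t ↦ t / (1 + t)`,
so `f_n(s) = 1 - (t / (1 + n t))²`. Each factor equals
`(1 + (n - 1) t) (1 + (n + 1) t) / (1 + n t)²`, so the partial products telescope to
`(1 - t) (1 + N t) / (1 + (N - 1) t) → 1 - t`; the infinite product converges because
`(t / (1 + n t))² ≤ 1 / (n + 1)²` is summable.
-/

section Iterates

variable {f : ℝ → ℝ}

theorem apply_one_sub_sq
    (hf : ∀ s ∈ Set.Ico (0 : ℝ) 1, f s = 1 - ((1 - s) ^ (-(1/2 : ℝ)) + 1) ^ (-(2 : ℝ)))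
    (hf1 : f 1 = 1) {u : ℝ} (hu0 : 0 ≤ u) (hu1 : u ≤ 1) :
    f (1 - u ^ 2) = 1 - (u / (1 + u)) ^ 2 := by
  rcases hu0.eq_or_lt with rfl | hu
  · simpa using hf1
  have hsqrt : (u ^ 2) ^ (-(1/2 : ℝ)) = u⁻¹ := by
    rw [Real.rpow_neg (sq_nonneg u), ← Real.sqrt_eq_rpow, Real.sqrt_sq hu0]
  rw [hf _ ⟨by nlinarith, by nlinarith⟩, sub_sub_cancel, hsqrt,
    Real.rpow_neg (by positivity), Real.rpow_two]
  field_simp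

theorem iterate_one_sub_sq
    (hf : ∀ s ∈ Set.Ico (0 : ℝ) 1, f s = 1 - ((1 - s) ^ (-(1/2 : ℝ)) + 1) ^ (-(2 : ℝ)))
    (hf1 : f 1 = 1) (n : ℕ) {t : ℝ} (ht0 : 0 ≤ t) (ht1 : t ≤ 1) :
    f^[n] (1 - t ^ 2) = 1 - (t / (1 + n * t)) ^ 2 := by
  induction n with
  | zero => simp
  | succ n ih =>
    have hpos : 0 < 1 + n * t := by positivity
    have hle : t / (1 + n * t) ≤ 1 := (div_le_one hpos).2 (by nlinarith)
    rw [Function.iterate_succ_apply', ih, apply_one_sub_sq hf hf1 (by positivity) hle]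
    congr 2
    field_simp
    push_cast
    ring

end Iterates

section Product

variable {t : ℝ}

theorem prod_one_sub_sq_mul (ht : 0 ≤ t) (N : ℕ) :
    (∏ n ∈ range N, (1 - (t / (1 + n * t)) ^ 2)) * (1 + (N - 1) * t)
      = (1 - t) * (1 + N * t) := by
  induction N with
  | zero => simp only [range_zero, Nat.cast_zero]; ring
  | succ N ih =>
    have hpos : 0 < 1 + N * t := by positivity
    have hfactor : (1 - (t / (1 + N * t)) ^ 2) * (1 + N * t)
        = (1 + (N - 1) * t) * (1 + (N + 1) * t) / (1 + N * t) := by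
      field_simp
      ring
    calc (∏ n ∈ range (N + 1), (1 - (t / (1 + n * t)) ^ 2)) * (1 + ((N + 1 : ℕ) - 1) * t)
        = (∏ n ∈ range N, (1 - (t / (1 + n * t)) ^ 2))
            * ((1 - (t / (1 + N * t)) ^ 2) * (1 + N * t)) := by
          rw [prod_range_succ]; push_cast; ring
      _ = (1 - t) * (1 + (N + 1 : ℕ) * t) := by
          rw [hfactor, mul_div_assoc', ← mul_assoc, ih]
          push_cast
          field_simp

theorem multipliable_one_sub_sq (ht0 : 0 ≤ t) (ht1 : t ≤ 1) :
    Multipliable fun n : ℕ ↦ 1 - (t / (1 + n * t)) ^ 2 := by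
  have hbound (n : ℕ) : (t / (1 + n * t)) ^ 2 ≤ 1 / ((n + 1 : ℕ) : ℝ) ^ 2 := by
    rw [← one_div_pow]
    gcongr ?_ ^ 2
    rw [div_le_div_iff₀ (by positivity) (by positivity)]
    push_cast
    nlinarith
  have hsum : Summable fun n : ℕ ↦ (t / (1 + n * t)) ^ 2 :=
    Summable.of_nonneg_of_le (fun n ↦ sq_nonneg _) hbound
      ((summable_nat_add_iff 1).2 (Real.summable_one_div_nat_pow.2 one_lt_two))
  simpa [sub_eq_add_neg] using Real.multipliable_one_add_of_summable hsum.neg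

theorem prod_one_sub_sq_mem_Icc (ht0 : 0 ≤ t) (ht1 : t ≤ 1) {N : ℕ} (hN : 1 ≤ N) :
    ∏ n ∈ range N, (1 - (t / (1 + n * t)) ^ 2) ∈ Icc (1 - t) (1 - t + 1 / N) := by
  have hN' : (1 : ℝ) ≤ N := by exact_mod_cast hN
  have hD : 0 < 1 + ((N : ℝ) - 1) * t := by nlinarith
  have hgap : ∏ n ∈ range N, (1 - (t / (1 + n * t)) ^ 2) - (1 - t)
      = (1 - t) * t / (1 + (N - 1) * t) := by
    rw [eq_div_iff hD.ne', sub_mul, prod_one_sub_sq_mul ht0]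
    ring
  have hlower : 0 ≤ (1 - t) * t / (1 + (N - 1) * t) := div_nonneg (by nlinarith) hD.le
  have hupper : (1 - t) * t / (1 + (N - 1) * t) ≤ 1 / N := by
    rw [div_le_div_iff₀ hD (by positivity)]
    nlinarith
  constructor <;> linarith

theorem tendsto_prod_one_sub_sq (ht0 : 0 ≤ t) (ht1 : t ≤ 1) :
    Tendsto (fun N : ℕ ↦ ∏ n ∈ range N, (1 - (t / (1 + n * t)) ^ 2))
      atTop (𝓝 (1 - t)) := by
  have hbounds := (eventually_ge_atTop 1).mono fun N ↦ prod_one_sub_sq_mem_Icc ht0 ht1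
  refine tendsto_of_tendsto_of_tendsto_of_le_of_le' tendsto_const_nhds ?_
    (hbounds.mono fun _ ↦ And.left) (hbounds.mono fun _ ↦ And.right)
  simpa using
    (tendsto_const_nhds (x := 1 - t)).add (tendsto_one_div_atTop_nhds_zero_nat (𝕜 := ℝ))

theorem tprod_one_sub_sq (ht0 : 0 ≤ t) (ht1 : t ≤ 1) :
    ∏' n : ℕ, (1 - (t / (1 + n * t)) ^ 2) = 1 - t :=
  tendsto_nhds_unique (multipliable_one_sub_sq ht0 ht1).hasProd.tendsto_prod_nat
    (tendsto_prod_one_sub_sq ht0 ht1)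

end Product

/-- for `α = 1/2` and the power-fractional offspring generating function
`f(s) = 1 - ((1-s)^{-1/2} + 1)^{-2}`, the infinite product `φ(s) = ∏_{n=0}^∞ f_n(s)`
of the iterates of `f` equals `1 - √(1-s)` for all `s ∈ [0,1]`. -/
theorem power_fractional_stationary_product (f : ℝ → ℝ)
    (hf : ∀ s ∈ Set.Ico (0 : ℝ) 1,
      f s = 1 - ((1 - s) ^ (-(1/2 : ℝ)) + 1) ^ (-(2 : ℝ)))
    (hf1 : f 1 = 1) :
    ∀ s ∈ Set.Icc (0 : ℝ) 1, (∏' n : ℕ, f^[n] s) = 1 - Real.sqrt (1 - s) := by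
  rintro s ⟨hs0, hs1⟩
  set t := Real.sqrt (1 - s)
  have hs : s = 1 - t ^ 2 := by rw [Real.sq_sqrt (by linarith)]; ring
  have ht1 : t ≤ 1 := Real.sqrt_le_one.2 (by linarith)
  rw [hs, tprod_congr fun n ↦ iterate_one_sub_sq hf hf1 n (Real.sqrt_nonneg _) ht1]
  exact tprod_one_sub_sq (Real.sqrt_nonneg _) ht1
end

section
/- If f(s) = s + (1-s)^{1+α} ℓ_A(1/(1-s)) is the generating function of a probability distribution on the nonnegative integers with α ∈ (0,1) and ℓ_A slowly varying, and the immigration generating function g satisfies the finite-mean condition g'(1) < ∞ (or condition (B2)), then ∫_0^1 (1-g(s))/(f(s)-s) ds < ∞. -/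
open Filter MeasureTheory Set


/-- `ℓ` is slowly varying at infinity. -/
def SlowlyVarying (ℓ : ℝ → ℝ) : Prop :=
  ∀ c : ℝ, 0 < c → Tendsto (fun x => ℓ (c * x) / ℓ x) atTop (nhds 1)

noncomputable def FWF (p : PMF ℕ) (s : ℝ) : ℝ :=
  ∑' k : ℕ, (p k).toReal * ∑ i ∈ Finset.range k, s ^ i

lemma FW_geom_id (s : ℝ) (n : ℕ) :
    (1 - s) * ∑ i ∈ Finset.range n, s ^ i = 1 - s ^ n := by
  have h := geom_sum_mul s n
  linarith [h]

lemma FW_geom_le {s : ℝ} (hs : 0 ≤ s) (hs1 : s < 1) (n : ℕ) :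
    ∑ i ∈ Finset.range n, s ^ i ≤ (1 - s)⁻¹ := by
  have h1 : (1 - s) * ∑ i ∈ Finset.range n, s ^ i ≤ 1 := by
    rw [FW_geom_id]
    nlinarith [pow_le_one₀ hs hs1.le (n := n), pow_nonneg hs n]
  have h2 : (0:ℝ) < 1 - s := by linarith
  rw [← one_div, le_div_iff₀ h2]
  linarith [h1]

lemma FW_summable_coe (p : PMF ℕ) : Summable (fun k => (p k).toReal) :=
  ENNReal.summable_toReal (by simp [p.tsum_coe])

lemma FW_tsum_coe (p : PMF ℕ) : (∑' k : ℕ, (p k).toReal) = 1 := by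
  rw [show (∑' k : ℕ, (p k).toReal) = (∑' k : ℕ, p k).toReal from (ENNReal.tsum_toReal_eq (fun k => (p.apply_ne_top k))).symm]
  simp [p.tsum_coe]

lemma FW_summable_F (p : PMF ℕ) {s : ℝ} (hs : s ∈ Ico (0:ℝ) 1) :
    Summable (fun k : ℕ => (p k).toReal * ∑ i ∈ Finset.range k, s ^ i) := by
  refine Summable.of_nonneg_of_le (fun k => ?_) (fun k => ?_)
    ((FW_summable_coe p).mul_right (1 - s)⁻¹)
  · have : (0:ℝ) ≤ ∑ i ∈ Finset.range k, s ^ i :=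
      Finset.sum_nonneg fun i _ => pow_nonneg hs.1 i
    positivity
  · exact mul_le_mul_of_nonneg_left (FW_geom_le hs.1 hs.2 k) ENNReal.toReal_nonneg

lemma FW_summable_pow (p : PMF ℕ) {s : ℝ} (hs : s ∈ Ico (0:ℝ) 1) :
    Summable (fun k : ℕ => (p k).toReal * s ^ k) := by
  refine Summable.of_nonneg_of_le (fun k => ?_) (fun k => ?_) (FW_summable_coe p)
  · have := pow_nonneg hs.1 k; positivity
  · nlinarith [pow_le_one₀ hs.1 hs.2.le (n := k), ENNReal.toReal_nonneg (a := p k),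
      pow_nonneg hs.1 k]

lemma FW_oneSub (p : PMF ℕ) {s : ℝ} (hs : s ∈ Ico (0:ℝ) 1) :
    1 - (∑' k : ℕ, (p k).toReal * s ^ k) = (1 - s) * FWF p s := by
  rw [FWF, ← tsum_mul_left]
  have h1 : ∀ k : ℕ, (1 - s) * ((p k).toReal * ∑ i ∈ Finset.range k, s ^ i)
      = (p k).toReal - (p k).toReal * s ^ k := by
    intro k
    calc (1 - s) * ((p k).toReal * ∑ i ∈ Finset.range k, s ^ i)
        = (p k).toReal * ((1 - s) * ∑ i ∈ Finset.range k, s ^ i) := by ring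
      _ = (p k).toReal * (1 - s ^ k) := by rw [FW_geom_id]
      _ = (p k).toReal - (p k).toReal * s ^ k := by ring
  rw [tsum_congr h1, Summable.tsum_sub (FW_summable_coe p) (FW_summable_pow p hs), FW_tsum_coe]

lemma FW_F_mono (p : PMF ℕ) : MonotoneOn (FWF p) (Ico (0:ℝ) 1) := by
  intro s hs t ht hst
  refine Summable.tsum_le_tsum (fun k => ?_) (FW_summable_F p hs) (FW_summable_F p ht)
  refine mul_le_mul_of_nonneg_left ?_ ENNReal.toReal_nonneg
  exact Finset.sum_le_sum fun i _ => pow_le_pow_left₀ hs.1 hst i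

lemma FW_F_nonneg (p : PMF ℕ) {s : ℝ} (hs : s ∈ Ico (0:ℝ) 1) : 0 ≤ FWF p s := by
  refine tsum_nonneg fun k => ?_
  have : (0:ℝ) ≤ ∑ i ∈ Finset.range k, s ^ i :=
    Finset.sum_nonneg fun i _ => pow_nonneg hs.1 i
  positivity

lemma FW_F_le_mean (q : PMF ℕ) (hm : (∑' k : ℕ, (k : ENNReal) * q k) < ⊤)
    {s : ℝ} (hs : s ∈ Ico (0:ℝ) 1) :
    FWF q s ≤ (∑' k : ℕ, (k : ENNReal) * q k).toReal := by
  have hne : ∀ k : ℕ, ((k : ENNReal) * q k) ≠ ⊤ :=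
    fun k => ENNReal.mul_ne_top (ENNReal.natCast_ne_top k) (q.apply_ne_top k)
  rw [ENNReal.tsum_toReal_eq hne]
  have hsum : Summable (fun k : ℕ => ((k : ENNReal) * q k).toReal) :=
    ENNReal.summable_toReal hm.ne
  refine Summable.tsum_le_tsum (fun k => ?_) (FW_summable_F q hs) hsum
  rw [ENNReal.toReal_mul, ENNReal.toReal_natCast]
  have h1 : ∑ i ∈ Finset.range k, s ^ i ≤ (k:ℝ) := by
    calc ∑ i ∈ Finset.range k, s ^ i ≤ ∑ i ∈ Finset.range k, (1:ℝ) :=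
          Finset.sum_le_sum fun i _ => pow_le_one₀ hs.1 hs.2.le
      _ = (k:ℝ) := by simp
  calc (q k).toReal * ∑ i ∈ Finset.range k, s ^ i ≤ (q k).toReal * k :=
        mul_le_mul_of_nonneg_left h1 ENNReal.toReal_nonneg
    _ = (k:ℝ) * (q k).toReal := by ring
lemma FW_ratio_bounds (ℓ : ℝ → ℝ) (h : SlowlyVarying ℓ) {δ : ℝ} (hδ : 0 < δ) (hδ1 : δ < 1) :
    ∃ X : ℝ, 1 < X ∧ ∀ x, X ≤ x →
      ℓ x ≠ 0 ∧ 1 - δ ≤ ℓ (2 * x) / ℓ x ∧ ℓ (2 * x) / ℓ x ≤ 1 + δ := by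
  have h2 := h 2 (by norm_num)
  have hev : ∀ᶠ x in atTop, |ℓ (2 * x) / ℓ x - 1| < δ := by
    have := Metric.tendsto_nhds.1 h2 δ hδ
    simpa [Real.dist_eq] using this
  rcases eventually_atTop.1 hev with ⟨X0, hX0⟩
  refine ⟨max X0 2, lt_of_lt_of_le one_lt_two (le_max_right _ _), fun x hx => ?_⟩
  have habs := hX0 x (le_trans (le_max_left _ _) hx)
  have hne : ℓ x ≠ 0 := by
    intro h0
    rw [h0, div_zero] at habs
    rw [show |(0:ℝ) - 1| = 1 by norm_num] at habs
    linarith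
  rcases abs_sub_lt_iff.1 habs with ⟨ha, hb⟩
  exact ⟨hne, by linarith, by linarith⟩

lemma FW_dyadic_mem {s0 : ℝ} (hs0 : s0 ∈ Ico (0:ℝ) 1) (n : ℕ) :
    (1 - (1 - s0) / 2 ^ n) ∈ Ico s0 (1:ℝ) := by
  have h0 : (0:ℝ) < 1 - s0 := by linarith [hs0.2]
  constructor
  · have h1 : (1 - s0) / 2 ^ n ≤ 1 - s0 :=
      div_le_self h0.le (one_le_pow₀ (by norm_num))
    linarith
  · have : (0:ℝ) < (1 - s0) / 2 ^ n := by positivity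
    linarith

lemma FW_dyadic_arg (s0 : ℝ) (n : ℕ) :
    (1 + (1 - (1 - s0) / 2 ^ n)) / 2 = 1 - (1 - s0) / 2 ^ (n + 1) := by
  have : (2:ℝ) ^ (n+1) = 2 * 2 ^ n := by ring
  field_simp [this]
  ring

lemma FW_dyadic_lower (H : ℝ → ℝ) (s0 κ : ℝ) (hs0 : s0 ∈ Ico (0:ℝ) 1) (hκ : 0 < κ)
    (hd : ∀ s ∈ Ico s0 (1:ℝ), κ * H s ≤ H ((1 + s) / 2)) :
    ∀ n : ℕ, κ ^ n * H s0 ≤ H (1 - (1 - s0) / 2 ^ n) := by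
  intro n; induction n with
  | zero => simp
  | succ n ih =>
    have step := hd _ (FW_dyadic_mem hs0 n)
    rw [FW_dyadic_arg s0 n] at step
    calc κ ^ (n+1) * H s0 = κ * (κ ^ n * H s0) := by ring
      _ ≤ κ * H (1 - (1 - s0) / 2 ^ n) := mul_le_mul_of_nonneg_left ih hκ.le
      _ ≤ _ := step

lemma FW_dyadic_upper (G : ℝ → ℝ) (s0 K : ℝ) (hs0 : s0 ∈ Ico (0:ℝ) 1) (hK : 0 < K)
    (hd : ∀ s ∈ Ico s0 (1:ℝ), G ((1 + s) / 2) ≤ K * G s) :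
    ∀ n : ℕ, G (1 - (1 - s0) / 2 ^ n) ≤ K ^ n * G s0 := by
  intro n; induction n with
  | zero => simp
  | succ n ih =>
    have step := hd _ (FW_dyadic_mem hs0 n)
    rw [FW_dyadic_arg s0 n] at step
    calc G (1 - (1 - s0) / 2 ^ (n+1)) ≤ K * G (1 - (1 - s0) / 2 ^ n) := step
      _ ≤ K * (K ^ n * G s0) := mul_le_mul_of_nonneg_left ih hK.le
      _ = K ^ (n+1) * G s0 := by ring

lemma FW_pow_rpow (γ : ℝ) (n : ℕ) : ((2:ℝ) ^ (-γ)) ^ n = ((1/2:ℝ) ^ n) ^ γ := by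
  have h1 : ((2:ℝ) ^ (-γ)) ^ n = (2:ℝ) ^ (-γ * n) := by
    rw [← Real.rpow_natCast ((2:ℝ) ^ (-γ)) n, ← Real.rpow_mul (by norm_num : (0:ℝ) ≤ 2)]
  have h2 : ((1/2:ℝ) ^ n) = (2:ℝ) ^ (-(n:ℝ)) := by
    rw [Real.rpow_neg (by norm_num : (0:ℝ) ≤ 2), Real.rpow_natCast, div_pow, one_pow, one_div]
  rw [h1, h2, ← Real.rpow_mul (by norm_num : (0:ℝ) ≤ 2)]
  congr 1; ring

lemma FW_pow_rpow' (γ : ℝ) (n : ℕ) : ((2:ℝ) ^ γ) ^ n = ((2:ℝ) ^ n) ^ γ := by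
  have h1 : ((2:ℝ) ^ γ) ^ n = (2:ℝ) ^ (γ * n) := by
    rw [← Real.rpow_natCast ((2:ℝ) ^ γ) n, ← Real.rpow_mul (by norm_num : (0:ℝ) ≤ 2)]
  have h2 : ((2:ℝ) ^ n : ℝ) = (2:ℝ) ^ ((n:ℝ)) := (Real.rpow_natCast 2 n).symm
  rw [h1, h2, ← Real.rpow_mul (by norm_num : (0:ℝ) ≤ 2)]
  congr 1; ring

lemma FW_lower_pointwise (H : ℝ → ℝ) (s0 γ : ℝ) (hs0 : s0 ∈ Ico (0:ℝ) 1)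
    (hanti : AntitoneOn H (Ico (0:ℝ) 1)) (hγ : 0 < γ) (hH0 : 0 ≤ H s0)
    (hd : ∀ s ∈ Ico s0 (1:ℝ), (2:ℝ) ^ (-γ) * H s ≤ H ((1 + s) / 2)) :
    ∀ s ∈ Ico s0 (1:ℝ), H s0 * ((1 - s) / (2 * (1 - s0))) ^ γ ≤ H s := by
  intro s hs
  have h0 : (0:ℝ) < 1 - s0 := by linarith [hs0.2]
  have h1 : (0:ℝ) < 1 - s := by linarith [hs.2]
  set r : ℝ := (1 - s) / (1 - s0) with hr_def
  have hr0 : 0 < r := div_pos h1 h0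
  have hr1 : r ≤ 1 := by rw [hr_def, div_le_one h0]; linarith [hs.1]
  have hex : ∃ n : ℕ, (1/2:ℝ) ^ n ≤ r := by
    obtain ⟨n, hn⟩ := exists_pow_lt_of_lt_one hr0 (by norm_num : (1/2:ℝ) < 1)
    exact ⟨n, hn.le⟩
  set n := Nat.find hex with hn_def
  have hn : (1/2:ℝ) ^ n ≤ r := Nat.find_spec hex
  have hsle : s ≤ 1 - (1 - s0) / 2 ^ n := by
    have h2 : (1 - s0) / 2 ^ n ≤ 1 - s := by
      have h3 : (1 - s0) * (1/2:ℝ) ^ n ≤ (1 - s0) * r := mul_le_mul_of_nonneg_left hn h0.le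
      have h4 : (1 - s0) * r = 1 - s := by rw [hr_def]; field_simp
      have h5 : (1 - s0) * (1/2:ℝ) ^ n = (1 - s0) / 2 ^ n := by
        rw [div_pow, one_pow]; ring
      linarith
    linarith
  have hmem_s : s ∈ Ico (0:ℝ) 1 := ⟨le_trans hs0.1 hs.1, hs.2⟩
  have hmem_n : (1 - (1 - s0) / 2 ^ n) ∈ Ico (0:ℝ) 1 := by
    have := FW_dyadic_mem hs0 n
    exact ⟨le_trans hs0.1 this.1, this.2⟩
  have h6 : H (1 - (1 - s0) / 2 ^ n) ≤ H s := hanti hmem_s hmem_n hsle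
  have h7 := FW_dyadic_lower H s0 _ hs0 (Real.rpow_pos_of_pos two_pos (-γ)) hd n
  have h8 : r / 2 ≤ (1/2:ℝ) ^ n := by
    match n, hn_def with
    | 0, _ => simp; linarith
    | (m+1), hmd =>
      have hmin : ¬ ((1/2:ℝ) ^ m ≤ r) := Nat.find_min hex (by omega : m < n)
      push_neg at hmin
      calc r / 2 ≤ (1/2:ℝ) ^ m / 2 := by linarith
        _ = (1/2:ℝ) ^ (m+1) := by ring
  have h9 : (r / 2) ^ γ ≤ ((1/2:ℝ) ^ n) ^ γ :=
    Real.rpow_le_rpow (by positivity) h8 hγ.le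
  have h10 : H s0 * (r / 2) ^ γ ≤ H s0 * ((1/2:ℝ) ^ n) ^ γ :=
    mul_le_mul_of_nonneg_left h9 hH0
  have h11 : (1 - s) / (2 * (1 - s0)) = r / 2 := by rw [hr_def, div_div, mul_comm]
  rw [h11]
  calc H s0 * (r / 2) ^ γ ≤ H s0 * ((1/2:ℝ) ^ n) ^ γ := h10
    _ = ((2:ℝ) ^ (-γ)) ^ n * H s0 := by rw [FW_pow_rpow]; ring
    _ ≤ H (1 - (1 - s0) / 2 ^ n) := h7
    _ ≤ H s := h6

lemma FW_upper_pointwise (G : ℝ → ℝ) (s0 γ : ℝ) (hs0 : s0 ∈ Ico (0:ℝ) 1)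
    (hmono : MonotoneOn G (Ico (0:ℝ) 1)) (hγ : 0 ≤ γ) (hG0 : 0 ≤ G s0)
    (hd : ∀ s ∈ Ico s0 (1:ℝ), G ((1 + s) / 2) ≤ (2:ℝ) ^ γ * G s) :
    ∀ s ∈ Ico s0 (1:ℝ), G s ≤ G s0 * (2 * (1 - s0) / (1 - s)) ^ γ := by
  intro s hs
  have h0 : (0:ℝ) < 1 - s0 := by linarith [hs0.2]
  have h1 : (0:ℝ) < 1 - s := by linarith [hs.2]
  set r : ℝ := (1 - s) / (1 - s0) with hr_def
  have hr0 : 0 < r := div_pos h1 h0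
  have hr1 : r ≤ 1 := by rw [hr_def, div_le_one h0]; linarith [hs.1]
  have hex : ∃ n : ℕ, (1/2:ℝ) ^ n ≤ r := by
    obtain ⟨n, hn⟩ := exists_pow_lt_of_lt_one hr0 (by norm_num : (1/2:ℝ) < 1)
    exact ⟨n, hn.le⟩
  set n := Nat.find hex with hn_def
  have hn : (1/2:ℝ) ^ n ≤ r := Nat.find_spec hex
  have hsle : s ≤ 1 - (1 - s0) / 2 ^ n := by
    have h3 : (1 - s0) * (1/2:ℝ) ^ n ≤ (1 - s0) * r := mul_le_mul_of_nonneg_left hn h0.le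
    have h4 : (1 - s0) * r = 1 - s := by rw [hr_def]; field_simp
    have h5 : (1 - s0) * (1/2:ℝ) ^ n = (1 - s0) / 2 ^ n := by
      rw [div_pow, one_pow]; ring
    linarith
  have hmem_s : s ∈ Ico (0:ℝ) 1 := ⟨le_trans hs0.1 hs.1, hs.2⟩
  have hmem_n : (1 - (1 - s0) / 2 ^ n) ∈ Ico (0:ℝ) 1 := by
    have := FW_dyadic_mem hs0 n
    exact ⟨le_trans hs0.1 this.1, this.2⟩
  have h6 : G s ≤ G (1 - (1 - s0) / 2 ^ n) := hmono hmem_s hmem_n hsle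
  have h7 := FW_dyadic_upper G s0 _ hs0 (Real.rpow_pos_of_pos two_pos γ) hd n
  have h8 : (2:ℝ) ^ n ≤ 2 / r := by
    match n, hn_def with
    | 0, _ =>
      simp only [pow_zero]
      rw [le_div_iff₀ hr0]; linarith
    | (m+1), hmd =>
      have hmin : ¬ ((1/2:ℝ) ^ m ≤ r) := Nat.find_min hex (by omega : m < n)
      push_neg at hmin
      have hm2 : (0:ℝ) < (2:ℝ) ^ m := by positivity
      have h12 : (1/2:ℝ) ^ m = ((2:ℝ) ^ m)⁻¹ := by rw [div_pow, one_pow, one_div]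
      rw [h12] at hmin
      have h13 : r * (2:ℝ) ^ m < 1 := by
        have := mul_lt_mul_of_pos_right hmin hm2
        rwa [inv_mul_cancel₀ hm2.ne'] at this
      have : (2:ℝ) ^ (m+1) = 2 * (2:ℝ) ^ m := by ring
      rw [this, le_div_iff₀ hr0]
      nlinarith
  have h9 : ((2:ℝ) ^ n) ^ γ ≤ (2 / r) ^ γ :=
    Real.rpow_le_rpow (by positivity) h8 hγ
  have h11 : 2 * (1 - s0) / (1 - s) = 2 / r := by
    rw [hr_def, div_div_eq_mul_div]
  rw [h11]
  calc G s ≤ G (1 - (1 - s0) / 2 ^ n) := h6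
    _ ≤ ((2:ℝ) ^ γ) ^ n * G s0 := h7
    _ = G s0 * ((2:ℝ) ^ n) ^ γ := by rw [FW_pow_rpow']; ring
    _ ≤ G s0 * (2 / r) ^ γ := mul_le_mul_of_nonneg_left h9 hG0

lemma FW_H_bound (α : ℝ) (hα0 : 0 < α) (ℓA : ℝ → ℝ) (hℓA : SlowlyVarying ℓA)
    (H : ℝ → ℝ) (hanti : AntitoneOn H (Ico (0:ℝ) 1))
    (hform : ∀ s ∈ Ico (0:ℝ) 1, H s = (1 - s) ^ α * ℓA (1 / (1 - s)))
    {ε : ℝ} (hε : 0 < ε) :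
    ∃ s2 ∈ Ico (0:ℝ) 1, 0 < H s2 ∧
      ∀ s ∈ Ico s2 (1:ℝ), H s2 * ((1 - s) / (2 * (1 - s2))) ^ (α + ε) ≤ H s := by
  have h2α : (1:ℝ) < 2 ^ α :=
    (Real.one_lt_rpow_iff_of_pos two_pos).mpr (Or.inl ⟨one_lt_two, hα0⟩)
  have h2negε : (2:ℝ) ^ (-ε) < 1 :=
    Real.rpow_lt_one_of_one_lt_of_neg one_lt_two (by linarith)
  have h2negεpos : (0:ℝ) < 2 ^ (-ε) := Real.rpow_pos_of_pos two_pos _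
  set δ := min (1 - (2:ℝ) ^ (-ε)) ((2 ^ α - 1)/2) with hδdef
  have hδ0 : 0 < δ := lt_min (by linarith) (by linarith)
  have hδ1 : δ < 1 := lt_of_le_of_lt (min_le_left _ _) (by linarith)
  have hδa : δ ≤ 1 - (2:ℝ) ^ (-ε) := min_le_left _ _
  have hδb : δ ≤ ((2:ℝ) ^ α - 1)/2 := min_le_right _ _
  obtain ⟨X, hX1, hX⟩ := FW_ratio_bounds ℓA hℓA hδ0 hδ1
  have hXpos : (0:ℝ) < X := lt_trans one_pos hX1
  set s2 : ℝ := 1 - 1/X with hs2def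
  have hs2mem : s2 ∈ Ico (0:ℝ) 1 := by
    constructor
    · have : 1/X ≤ 1 := by rw [div_le_one hXpos]; linarith
      simp only [hs2def]; linarith
    · have : 0 < 1/X := by positivity
      simp only [hs2def]; linarith
  -- basic facts for s in [s2, 1)
  have hbasic : ∀ s ∈ Ico s2 (1:ℝ), 0 < 1 - s ∧ X ≤ 1/(1-s) ∧
      (1 + s)/2 ∈ Ico (0:ℝ) 1 ∧ s ∈ Ico (0:ℝ) 1 := by
    intro s hs
    have h1s : 0 < 1 - s := by linarith [hs.2]
    have hle : 1 - s ≤ 1/X := by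
      have := hs.1; simp only [hs2def] at this; linarith
    have hxX : X ≤ 1/(1-s) := by
      have h := one_div_le_one_div_of_le h1s hle
      rwa [one_div_one_div] at h
    have hs0 : 0 ≤ s := le_trans hs2mem.1 hs.1
    exact ⟨h1s, hxX, ⟨by linarith, by linarith [hs.2]⟩, ⟨hs0, hs.2⟩⟩
  have harg : ∀ s : ℝ, s < 1 → 1/(1 - (1+s)/2) = 2 * (1/(1-s)) := by
    intro s hs1
    rw [show (1:ℝ) - (1+s)/2 = (1-s)/2 by ring, one_div_div, mul_one_div]
  have hform' : ∀ s ∈ Ico s2 (1:ℝ),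
      H ((1+s)/2) = (1-s) ^ α * ((2:ℝ) ^ (-α)) * ℓA (2 * (1/(1-s))) := by
    intro s hs
    obtain ⟨h1s, hxX, hmem', hmem⟩ := hbasic s hs
    rw [hform _ hmem', harg s hs.2, show (1:ℝ) - (1+s)/2 = (1-s)/2 by ring,
      Real.div_rpow h1s.le (by norm_num : (0:ℝ) ≤ 2), Real.rpow_neg (by norm_num : (0:ℝ) ≤ 2),
      div_eq_mul_inv]
  -- positivity of ℓA at 1/(1-s)
  have hLpos : ∀ s ∈ Ico s2 (1:ℝ), 0 < ℓA (1/(1-s)) := by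
    intro s hs
    obtain ⟨h1s, hxX, hmem', hmem⟩ := hbasic s hs
    obtain ⟨hne, hlo, hhi⟩ := hX _ hxX
    rcases lt_trichotomy (ℓA (1/(1-s))) 0 with hL | hL | hL
    · exfalso
      set L := ℓA (1/(1-s)) with hLdef
      set L2 := ℓA (2 * (1/(1-s))) with hL2def
      have hL2eq : L2 = (L2 / L) * L := (div_mul_cancel₀ L2 hne).symm
      have hc : (0:ℝ) < (1-s) ^ α := Real.rpow_pos_of_pos h1s _
      have hantile : H ((1+s)/2) ≤ H s := by
        refine hanti hmem hmem' (by linarith [hs.2])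
      rw [hform _ hmem, hform' s hs] at hantile
      -- L2 ≥ (1+δ) L  since L2/L ≤ 1+δ and L < 0
      have hL2ge : (1+δ) * L ≤ L2 := by
        calc (1+δ) * L ≤ (L2/L) * L := mul_le_mul_of_nonpos_right hhi hL.le
          _ = L2 := div_mul_cancel₀ L2 hne
      have htinv : (0:ℝ) < (2:ℝ) ^ (-α) := Real.rpow_pos_of_pos two_pos _
      have htα : (0:ℝ) < (2:ℝ) ^ α := Real.rpow_pos_of_pos two_pos _
      have hprod : (2:ℝ) ^ (-α) * (2:ℝ) ^ α = 1 := by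
        rw [← Real.rpow_add two_pos]; simp
      -- from hantile : (1-s)^α * 2^{-α} * L2 ≤ (1-s)^α * L
      have h1 : (2:ℝ) ^ (-α) * L2 ≤ L := by
        have := hantile
        nlinarith [this, hc]
      have h2 : (2:ℝ) ^ (-α) * ((1+δ) * L) ≤ (2:ℝ) ^ (-α) * L2 :=
        mul_le_mul_of_nonneg_left hL2ge htinv.le
      -- so 2^{-α} (1+δ) L ≤ L , L < 0 ⇒ 2^{-α}(1+δ) ≥ 1 ⇒ 1+δ ≥ 2^α
      have h3 : (2:ℝ) ^ (-α) * ((1+δ) * L) ≤ L := le_trans h2 h1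
      have h4 : 1 + δ < (2:ℝ) ^ α := by linarith
      have h5 : (2:ℝ) ^ (-α) * (1+δ) < 1 := by
        calc (2:ℝ) ^ (-α) * (1+δ) < (2:ℝ) ^ (-α) * (2:ℝ) ^ α :=
              mul_lt_mul_of_pos_left h4 htinv
          _ = 1 := hprod
      nlinarith [h3, h5, hL, mul_lt_mul_of_neg_right h5 hL]
    · exact absurd hL hne
    · exact hL
  have hHpos : ∀ s ∈ Ico s2 (1:ℝ), 0 < H s := by
    intro s hs
    obtain ⟨h1s, hxX, hmem', hmem⟩ := hbasic s hs
    rw [hform _ hmem]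
    exact mul_pos (Real.rpow_pos_of_pos h1s _) (hLpos s hs)
  -- doubling inequality
  have hd : ∀ s ∈ Ico s2 (1:ℝ), (2:ℝ) ^ (-(α+ε)) * H s ≤ H ((1+s)/2) := by
    intro s hs
    obtain ⟨h1s, hxX, hmem', hmem⟩ := hbasic s hs
    obtain ⟨hne, hlo, hhi⟩ := hX _ hxX
    set L := ℓA (1/(1-s)) with hLdef
    set L2 := ℓA (2 * (1/(1-s))) with hL2def
    have hLpos' : 0 < L := hLpos s hs
    have hL2ge : (1-δ) * L ≤ L2 := by
      calc (1-δ) * L ≤ (L2/L) * L := mul_le_mul_of_nonneg_right hlo hLpos'.le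
        _ = L2 := div_mul_cancel₀ L2 hne
    have hc : (0:ℝ) < (1-s) ^ α := Real.rpow_pos_of_pos h1s _
    have htinv : (0:ℝ) < (2:ℝ) ^ (-α) := Real.rpow_pos_of_pos two_pos _
    rw [hform _ hmem, hform' s hs]
    have hsplit : (2:ℝ) ^ (-(α+ε)) = (2:ℝ) ^ (-α) * (2:ℝ) ^ (-ε) := by
      rw [← Real.rpow_add two_pos]; congr 1; ring
    rw [hsplit]
    -- goal : 2^{-α} 2^{-ε} ((1-s)^α L) ≤ (1-s)^α 2^{-α} L2
    have hεδ : (2:ℝ) ^ (-ε) ≤ 1 - δ := by linarith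
    have hstep : (2:ℝ) ^ (-ε) * L ≤ L2 := by
      calc (2:ℝ) ^ (-ε) * L ≤ (1-δ) * L := mul_le_mul_of_nonneg_right hεδ hLpos'.le
        _ ≤ L2 := hL2ge
    nlinarith [mul_le_mul_of_nonneg_left hstep (le_of_lt (mul_pos hc htinv))]
  obtain ⟨hs2a, hs2b⟩ := hs2mem
  refine ⟨s2, ⟨hs2a, hs2b⟩, hHpos s2 ⟨le_refl _, hs2b⟩, ?_⟩
  exact FW_lower_pointwise H s2 (α+ε) ⟨hs2a, hs2b⟩ hanti (by linarith)
    (hHpos s2 ⟨le_refl _, hs2b⟩).le hd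

lemma FW_G_bound (β : ℝ) (hβ0 : 0 < β) (hβ1 : β < 1) (ℓB : ℝ → ℝ) (hℓB : SlowlyVarying ℓB)
    (G : ℝ → ℝ) (hmono : MonotoneOn G (Ico (0:ℝ) 1)) (hG0 : ∀ s ∈ Ico (0:ℝ) 1, 0 ≤ G s)
    (hform : ∀ s ∈ Ico (0:ℝ) 1, G s = (1 - s) ^ (β - 1) * ℓB (1 / (1 - s)))
    {ε : ℝ} (hε : 0 < ε) (hε1 : ε < 1) :
    ∃ s3 ∈ Ico (0:ℝ) 1,
      ∀ s ∈ Ico s3 (1:ℝ), G s ≤ G s3 * (2 * (1 - s3) / (1 - s)) ^ (1 - β + ε) := by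
  have h2ε : (1:ℝ) < 2 ^ ε :=
    (Real.one_lt_rpow_iff_of_pos two_pos).mpr (Or.inl ⟨one_lt_two, hε⟩)
  have h2ε2 : (2:ℝ) ^ ε < 2 := by
    have := Real.rpow_lt_rpow_of_exponent_lt one_lt_two hε1
    rwa [Real.rpow_one] at this
  set δ : ℝ := (2:ℝ) ^ ε - 1 with hδdef
  have hδ0 : 0 < δ := by linarith
  have hδ1 : δ < 1 := by linarith
  obtain ⟨X, hX1, hX⟩ := FW_ratio_bounds ℓB hℓB hδ0 hδ1
  have hXpos : (0:ℝ) < X := lt_trans one_pos hX1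
  set s3 : ℝ := 1 - 1/X with hs3def
  have hs3mem : s3 ∈ Ico (0:ℝ) 1 := by
    constructor
    · have : 1/X ≤ 1 := by rw [div_le_one hXpos]; linarith
      simp only [hs3def]; linarith
    · have : 0 < 1/X := by positivity
      simp only [hs3def]; linarith
  have hbasic : ∀ s ∈ Ico s3 (1:ℝ), 0 < 1 - s ∧ X ≤ 1/(1-s) ∧
      (1 + s)/2 ∈ Ico (0:ℝ) 1 ∧ s ∈ Ico (0:ℝ) 1 := by
    intro s hs
    have h1s : 0 < 1 - s := by linarith [hs.2]
    have hle : 1 - s ≤ 1/X := by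
      have := hs.1; simp only [hs3def] at this; linarith
    have hxX : X ≤ 1/(1-s) := by
      have h := one_div_le_one_div_of_le h1s hle
      rwa [one_div_one_div] at h
    have hs0 : 0 ≤ s := le_trans hs3mem.1 hs.1
    exact ⟨h1s, hxX, ⟨by linarith, by linarith [hs.2]⟩, ⟨hs0, hs.2⟩⟩
  have hform' : ∀ s ∈ Ico s3 (1:ℝ),
      G ((1+s)/2) = (1-s) ^ (β-1) * ((2:ℝ) ^ (1-β)) * ℓB (2 * (1/(1-s))) := by
    intro s hs
    obtain ⟨h1s, hxX, hmem', hmem⟩ := hbasic s hs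
    have harg : 1/(1 - (1+s)/2) = 2 * (1/(1-s)) := by
      rw [show (1:ℝ) - (1+s)/2 = (1-s)/2 by ring, one_div_div, mul_one_div]
    rw [hform _ hmem', harg, show (1:ℝ) - (1+s)/2 = (1-s)/2 by ring,
      Real.div_rpow h1s.le (by norm_num : (0:ℝ) ≤ 2)]
    congr 2
    rw [div_eq_mul_inv, ← Real.rpow_neg (by norm_num : (0:ℝ) ≤ 2)]
    congr 1; ring
  -- doubling
  have hd : ∀ s ∈ Ico s3 (1:ℝ), G ((1+s)/2) ≤ (2:ℝ) ^ (1 - β + ε) * G s := by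
    intro s hs
    obtain ⟨h1s, hxX, hmem', hmem⟩ := hbasic s hs
    obtain ⟨hne, hlo, hhi⟩ := hX _ hxX
    set L := ℓB (1/(1-s)) with hLdef
    set L2 := ℓB (2 * (1/(1-s))) with hL2def
    have hc : (0:ℝ) < (1-s) ^ (β-1) := Real.rpow_pos_of_pos h1s _
    have hLnn : 0 ≤ L := by
      have h := hG0 s hmem
      rw [hform _ hmem] at h
      nlinarith [hc, h]
    have hLpos : 0 < L := lt_of_le_of_ne hLnn (Ne.symm hne)
    have hL2le : L2 ≤ (1+δ) * L := by
      calc L2 = (L2/L) * L := (div_mul_cancel₀ L2 hne).symm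
        _ ≤ (1+δ) * L := mul_le_mul_of_nonneg_right hhi hLpos.le
    have hL2le' : L2 ≤ (2:ℝ) ^ ε * L := by
      rw [hδdef] at hL2le; linarith
    have ht1β : (0:ℝ) < (2:ℝ) ^ (1-β) := Real.rpow_pos_of_pos two_pos _
    rw [hform _ hmem, hform' s hs]
    have hsplit : (2:ℝ) ^ (1 - β + ε) = (2:ℝ) ^ (1-β) * (2:ℝ) ^ ε := by
      rw [← Real.rpow_add two_pos]
    rw [hsplit]
    nlinarith [mul_le_mul_of_nonneg_left hL2le' (le_of_lt (mul_pos hc ht1β))]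
  refine ⟨s3, hs3mem, ?_⟩
  exact FW_upper_pointwise G s3 (1 - β + ε) hs3mem hmono (by linarith)
    (hG0 s3 hs3mem) hd

lemma FW_Hglobal (H : ℝ → ℝ) (hHa : AntitoneOn H (Ico (0:ℝ) 1)) (γ : ℝ) (hγ : 0 ≤ γ)
    (s2 : ℝ) (hs2 : s2 ∈ Ico (0:ℝ) 1) (hpos : 0 < H s2)
    (hlow : ∀ s ∈ Ico s2 (1:ℝ), H s2 * ((1 - s) / (2 * (1 - s2))) ^ γ ≤ H s) :
    ∃ cH > 0, ∀ s ∈ Ioo (0:ℝ) 1, cH * (1 - s) ^ γ ≤ H s := by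
  have h2s2 : (0:ℝ) < 2 * (1 - s2) := by have := hs2.2; linarith
  have hKpos : (0:ℝ) < (2 * (1 - s2)) ^ (-γ) := Real.rpow_pos_of_pos h2s2 _
  refine ⟨min (H s2 * (2 * (1 - s2)) ^ (-γ)) (H s2), lt_min (by positivity) hpos, ?_⟩
  intro s hs
  have h1s : 0 < 1 - s := by linarith [hs.2]
  have hmem : s ∈ Ico (0:ℝ) 1 := ⟨hs.1.le, hs.2⟩
  rcases le_or_gt s2 s with hle | hlt
  · have h := hlow s ⟨hle, hs.2⟩
    have hrw : ((1 - s) / (2 * (1 - s2))) ^ γ = (1 - s) ^ γ * (2 * (1 - s2)) ^ (-γ) := by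
      rw [Real.div_rpow h1s.le h2s2.le, Real.rpow_neg h2s2.le, div_eq_mul_inv]
    rw [hrw] at h
    calc min (H s2 * (2 * (1 - s2)) ^ (-γ)) (H s2) * (1 - s) ^ γ
        ≤ H s2 * (2 * (1 - s2)) ^ (-γ) * (1 - s) ^ γ := by
          have : (0:ℝ) ≤ (1 - s) ^ γ := (Real.rpow_pos_of_pos h1s _).le
          exact mul_le_mul_of_nonneg_right (min_le_left _ _) this
      _ = H s2 * ((1 - s) ^ γ * (2 * (1 - s2)) ^ (-γ)) := by ring
      _ ≤ H s := h
  · have h := hHa hmem hs2 hlt.le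
    have hle1 : (1 - s) ^ γ ≤ 1 := Real.rpow_le_one h1s.le (by linarith [hs.1]) hγ
    have hmin0 : (0:ℝ) < min (H s2 * (2 * (1 - s2)) ^ (-γ)) (H s2) :=
      lt_min (by positivity) hpos
    calc min (H s2 * (2 * (1 - s2)) ^ (-γ)) (H s2) * (1 - s) ^ γ
        ≤ min (H s2 * (2 * (1 - s2)) ^ (-γ)) (H s2) * 1 :=
          mul_le_mul_of_nonneg_left hle1 hmin0.le
      _ ≤ H s2 := by rw [mul_one]; exact min_le_right _ _
      _ ≤ H s := h

lemma FW_Gglobal (G : ℝ → ℝ) (hGm : MonotoneOn G (Ico (0:ℝ) 1))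
    (hG0 : ∀ s ∈ Ico (0:ℝ) 1, 0 ≤ G s) (γ : ℝ) (hγ : 0 ≤ γ)
    (s3 : ℝ) (hs3 : s3 ∈ Ico (0:ℝ) 1)
    (hup : ∀ s ∈ Ico s3 (1:ℝ), G s ≤ G s3 * (2 * (1 - s3) / (1 - s)) ^ γ) :
    ∃ CG ≥ 0, ∀ s ∈ Ioo (0:ℝ) 1, G s ≤ CG * (1 - s) ^ (-γ) := by
  have h2s3 : (0:ℝ) < 2 * (1 - s3) := by have := hs3.2; linarith
  refine ⟨max (G s3 * (2 * (1 - s3)) ^ γ) (G s3),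
    le_trans (hG0 s3 hs3) (le_max_right _ _), ?_⟩
  intro s hs
  have h1s : 0 < 1 - s := by linarith [hs.2]
  have hmem : s ∈ Ico (0:ℝ) 1 := ⟨hs.1.le, hs.2⟩
  have hrnn : (0:ℝ) ≤ (1 - s) ^ (-γ) := (Real.rpow_pos_of_pos h1s _).le
  rcases le_or_gt s3 s with hle | hlt
  · have h := hup s ⟨hle, hs.2⟩
    have hrw : (2 * (1 - s3) / (1 - s)) ^ γ = (2 * (1 - s3)) ^ γ * (1 - s) ^ (-γ) := by
      rw [Real.div_rpow h2s3.le h1s.le, Real.rpow_neg h1s.le, div_eq_mul_inv]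
    rw [hrw] at h
    calc G s ≤ G s3 * ((2 * (1 - s3)) ^ γ * (1 - s) ^ (-γ)) := h
      _ = G s3 * (2 * (1 - s3)) ^ γ * (1 - s) ^ (-γ) := by ring
      _ ≤ max (G s3 * (2 * (1 - s3)) ^ γ) (G s3) * (1 - s) ^ (-γ) :=
          mul_le_mul_of_nonneg_right (le_max_left _ _) hrnn
  · have h := hGm hmem hs3 hlt.le
    have hge1 : (1:ℝ) ≤ (1 - s) ^ (-γ) :=
      Real.one_le_rpow_of_pos_of_le_one_of_nonpos h1s (by linarith [hs.1]) (by linarith)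
    calc G s ≤ G s3 := h
      _ = G s3 * 1 := (mul_one _).symm
      _ ≤ max (G s3 * (2 * (1 - s3)) ^ γ) (G s3) * (1 - s) ^ (-γ) :=
          mul_le_mul (le_max_right _ _) hge1 zero_le_one
            (le_trans (hG0 s3 hs3) (le_max_right _ _))

lemma FW_final (g f G H : ℝ → ℝ)
    (hGH : ∀ s ∈ Ioo (0:ℝ) 1, (1 - g s) / (f s - s) = G s / H s)
    (hGm : MonotoneOn G (Ico (0:ℝ) 1)) (hG0 : ∀ s ∈ Ico (0:ℝ) 1, 0 ≤ G s)
    (hHa : AntitoneOn H (Ico (0:ℝ) 1))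
    (γH γN cH CG : ℝ) (hγH : 0 ≤ γH) (hγN : 0 ≤ γN) (hρ : γH + γN < 1)
    (hcH : 0 < cH) (hCG : 0 ≤ CG)
    (hHb : ∀ s ∈ Ioo (0:ℝ) 1, cH * (1 - s) ^ γH ≤ H s)
    (hGb : ∀ s ∈ Ioo (0:ℝ) 1, G s ≤ CG * (1 - s) ^ (-γN)) :
    IntegrableOn (fun s => (1 - g s) / (f s - s)) (Ioo (0:ℝ) 1) := by
  set φ : ℝ → ℝ := fun s => G s / H s with hφdef
  have hHpos : ∀ s ∈ Ioo (0:ℝ) 1, 0 < H s := fun s hs =>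
    lt_of_lt_of_le (mul_pos hcH (Real.rpow_pos_of_pos (by linarith [hs.2]) _)) (hHb s hs)
  have hsub : Ioo (0:ℝ) 1 ⊆ Ico (0:ℝ) 1 := Ioo_subset_Ico_self
  have hφmono : MonotoneOn φ (Ioo (0:ℝ) 1) := by
    intro s hs t ht hst
    exact div_le_div₀ (hG0 t (hsub ht)) (hGm (hsub hs) (hsub ht) hst)
      (hHpos t ht) (hHa (hsub hs) (hsub ht) hst)
  have haem : AEMeasurable φ (volume.restrict (Ioo (0:ℝ) 1)) :=
    aemeasurable_restrict_of_monotoneOn measurableSet_Ioo hφmono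
  -- integrable majorant
  have hmaj : IntegrableOn (fun s : ℝ => (CG / cH) * (1 - s) ^ (-(γH + γN))) (Ioo 0 1) := by
    have h1 : IntervalIntegrable (fun x : ℝ => x ^ (-(γH + γN))) volume 0 1 :=
      intervalIntegral.intervalIntegrable_rpow' (by linarith)
    have h2 := (h1.comp_sub_left 1).symm
    simp only [sub_zero, sub_self] at h2
    have h3 : IntegrableOn (fun x : ℝ => (1 - x) ^ (-(γH + γN))) (Ioo 0 1) := by
      rw [intervalIntegrable_iff_integrableOn_Ioo_of_le (by norm_num : (0:ℝ) ≤ 1)] at h2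
      · exact h2
      
    exact h3.const_mul _
  -- the function φ is integrable on Ioo 0 1
  have hφint : IntegrableOn φ (Ioo (0:ℝ) 1) := by
    refine Integrable.mono' hmaj haem.aestronglyMeasurable ?_
    filter_upwards [ae_restrict_mem measurableSet_Ioo] with s hs
    have h1s : 0 < 1 - s := by linarith [hs.2]
    have hφnn : 0 ≤ φ s := div_nonneg (hG0 s (hsub hs)) (hHpos s hs).le
    rw [Real.norm_eq_abs, abs_of_nonneg hφnn]
    have hnum := hGb s hs
    have hden := hHb s hs
    have hdenpos : 0 < cH * (1 - s) ^ γH :=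
      mul_pos hcH (Real.rpow_pos_of_pos h1s _)
    have hnumnn : 0 ≤ CG * (1 - s) ^ (-γN) :=
      mul_nonneg hCG (Real.rpow_pos_of_pos h1s _).le
    calc φ s ≤ (CG * (1 - s) ^ (-γN)) / (cH * (1 - s) ^ γH) :=
          div_le_div₀ hnumnn hnum hdenpos hden
      _ = (CG / cH) * ((1 - s) ^ (-γN) / (1 - s) ^ γH) := by
          rw [mul_div_mul_comm]
      _ = (CG / cH) * (1 - s) ^ (-(γH + γN)) := by
          rw [← Real.rpow_sub h1s]; congr 2; ring
  exact hφint.congr_fun (fun s hs => (hGH s hs).symm) measurableSet_Ioo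

/-- if the critical offspring generating function has the form
`f(s) = s + (1-s)^{1+α} ℓ_A(1/(1-s))` with `α ∈ (0,1)` and `ℓ_A` slowly varying,
and the immigration generating function `g` has finite mean `g'(1) < ∞` (B1), or
satisfies `g(s) = 1 - (1-s)^β ℓ_B(1/(1-s))` with `β ∈ (α,1)` (B2), then the
Foster–Williamson condition `∫_0^1 (1-g(s))/(f(s)-s) ds < ∞` holds. -/
theorem foster_williamson_integral (α : ℝ) (hα : α ∈ Set.Ioo (0 : ℝ) 1)
    (ℓA : ℝ → ℝ) (hℓA : SlowlyVarying ℓA)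
    (p : PMF ℕ) (f : ℝ → ℝ)
    (hfgen : ∀ s ∈ Set.Icc (0 : ℝ) 1, f s = ∑' k : ℕ, (p k).toReal * s ^ k)
    (hf : ∀ s ∈ Set.Ico (0 : ℝ) 1, f s = s + (1 - s) ^ (1 + α) * ℓA (1 / (1 - s)))
    (q : PMF ℕ) (g : ℝ → ℝ)
    (hggen : ∀ s ∈ Set.Icc (0 : ℝ) 1, g s = ∑' k : ℕ, (q k).toReal * s ^ k)
    (hB : (∑' k : ℕ, (k : ENNReal) * q k) < ⊤ ∨
      ∃ β ∈ Set.Ioo α 1, ∃ ℓB : ℝ → ℝ, SlowlyVarying ℓB ∧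
        ∀ s ∈ Set.Ico (0 : ℝ) 1, g s = 1 - (1 - s) ^ β * ℓB (1 / (1 - s))) :
    MeasureTheory.IntegrableOn (fun s => (1 - g s) / (f s - s)) (Set.Ioo 0 1) := by
  obtain ⟨hα0, hα1⟩ := hα
  set G : ℝ → ℝ := FWF q with hGdef
  set H : ℝ → ℝ := fun s => 1 - FWF p s with hHdef
  have hK1 : ∀ s ∈ Ico (0:ℝ) 1, f s - s = (1 - s) * H s := by
    intro s hs
    have h := hfgen s ⟨hs.1, hs.2.le⟩
    have h2 := FW_oneSub p hs
    rw [h, hHdef]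
    linear_combination (-1 : ℝ) * h2
  have hK2 : ∀ s ∈ Ico (0:ℝ) 1, H s = (1 - s) ^ α * ℓA (1 / (1 - s)) := by
    intro s hs
    have h1s : (0:ℝ) < 1 - s := by linarith [hs.2]
    have e1 := hK1 s hs
    have e2 := hf s hs
    have e3 : (1 - s) ^ (1 + α) = (1 - s) * (1 - s) ^ α := by
      rw [Real.rpow_add h1s, Real.rpow_one]
    have e4 : (1 - s) * H s = (1 - s) * ((1 - s) ^ α * ℓA (1 / (1 - s))) := by
      rw [← e1, e2, e3]; ring
    exact mul_left_cancel₀ (ne_of_gt h1s) e4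
  have hK4 : ∀ s ∈ Ico (0:ℝ) 1, 1 - g s = (1 - s) * G s := by
    intro s hs
    rw [hggen s ⟨hs.1, hs.2.le⟩, hGdef]
    exact FW_oneSub q hs
  have hHa : AntitoneOn H (Ico (0:ℝ) 1) := by
    intro s hs t ht hst
    simp only [hHdef]
    have := FW_F_mono p hs ht hst
    linarith
  have hGm : MonotoneOn G (Ico (0:ℝ) 1) := FW_F_mono q
  have hG0 : ∀ s ∈ Ico (0:ℝ) 1, 0 ≤ G s := fun s hs => FW_F_nonneg q hs
  have hGH : ∀ s ∈ Ioo (0:ℝ) 1, (1 - g s) / (f s - s) = G s / H s := by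
    intro s hs
    have hmem : s ∈ Ico (0:ℝ) 1 := ⟨hs.1.le, hs.2⟩
    rw [hK4 s hmem, hK1 s hmem]
    exact mul_div_mul_left _ _ (ne_of_gt (show (0:ℝ) < 1 - s by linarith [hs.2]))
  rcases hB with hB1 | ⟨β, hβ, ℓB, hℓB, hg2⟩
  · -- case (B1): finite mean
    set ε : ℝ := (1 - α)/2 with hεdef
    have hε : 0 < ε := by simp only [hεdef]; linarith
    obtain ⟨s2, hs2, hHpos2, hHlow⟩ := FW_H_bound α hα0 ℓA hℓA H hHa hK2 hε
    obtain ⟨cH, hcH, hHb⟩ := FW_Hglobal H hHa (α + ε) (by linarith) s2 hs2 hHpos2 hHlow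
    refine FW_final g f G H hGH hGm hG0 hHa (α + ε) 0 cH
      ((∑' k : ℕ, (k : ENNReal) * q k).toReal) (by linarith) le_rfl
      (by simp only [hεdef]; linarith) hcH ENNReal.toReal_nonneg hHb ?_
    intro s hs
    rw [neg_zero, Real.rpow_zero, mul_one]
    exact FW_F_le_mean q hB1 ⟨hs.1.le, hs.2⟩
  · -- case (B2)
    obtain ⟨hαβ, hβ1⟩ := hβ
    set ε : ℝ := (β - α)/4 with hεdef
    have hε : 0 < ε := by simp only [hεdef]; linarith
    have hε1 : ε < 1 := by simp only [hεdef]; linarith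
    obtain ⟨s2, hs2, hHpos2, hHlow⟩ := FW_H_bound α hα0 ℓA hℓA H hHa hK2 hε
    obtain ⟨cH, hcH, hHb⟩ := FW_Hglobal H hHa (α + ε) (by linarith) s2 hs2 hHpos2 hHlow
    have hGform : ∀ s ∈ Ico (0:ℝ) 1, G s = (1 - s) ^ (β - 1) * ℓB (1 / (1 - s)) := by
      intro s hs
      have h1s : (0:ℝ) < 1 - s := by linarith [hs.2]
      have e2 := hg2 s hs
      have e3 : (1 - s) ^ β = (1 - s) * (1 - s) ^ (β - 1) := by
        have h := Real.rpow_add h1s 1 (β - 1)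
        rw [Real.rpow_one, show (1:ℝ) + (β - 1) = β by ring] at h
        exact h
      have e4 : (1 - s) * G s = (1 - s) * ((1 - s) ^ (β - 1) * ℓB (1 / (1 - s))) := by
        rw [← hK4 s hs, e2, e3]; ring
      exact mul_left_cancel₀ (ne_of_gt h1s) e4
    obtain ⟨s3, hs3, hGup⟩ := FW_G_bound β (by linarith) hβ1 ℓB hℓB G hGm hG0 hGform hε hε1
    obtain ⟨CG, hCG, hGb⟩ := FW_Gglobal G hGm hG0 (1 - β + ε) (by linarith) s3 hs3 hGup
    exact FW_final g f G H hGH hGm hG0 hHa (α + ε) (1 - β + ε) cH CG (by linarith)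
      (by linarith) (by simp only [hεdef]; linarith) hcH hCG hHb hGb
end

section
/- Let (X_n) be a stationary sequence whose one-step dynamics is X_1 = ∑_{i=1}^{X_0} A_i + B_1 with iid mean-one A_i independent of X_0. If P(X_0 > x) is regularly varying with index -γ, γ ∈ (0,1), then the conditional law of X_1/X_0 given X_0 > x converges to the point mass at 1 as x → ∞. -/
open Filter MeasureTheory ProbabilityTheory Set

/-! Given `X₀ = n`, the ratio `X₁ / X₀` is `(∑_{i<n} A_i + B₁) / n`, a function of `(A, B₁)`
alone. By independence, the probability that it deviates from `1` is the unconditional one,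
which tends to `0` as `n → ∞` by the strong law of large numbers. Since `X₀ > x` forces `n > x`,
the conditional probability given `X₀ > x` tends to `0`. -/

open scoped ENNReal Topology

section

variable {Ω β : Type*} [MeasurableSpace Ω] {P : Measure Ω}

theorem tendstoInMeasure_sum_add_div [IsProbabilityMeasure P] {X : ℕ → Ω → ℝ} {B : Ω → ℝ}
    (hint : Integrable (X 0) P) (hindep : Pairwise (Function.onFun (IndepFun · · P) X))
    (hident : ∀ i, IdentDistrib (X i) (X 0) P P) (hB : AEMeasurable B P) :
    TendstoInMeasure P (fun n ω => (∑ i ∈ Finset.range n, X i ω + B ω) / n) atTop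
      fun _ => P[X 0] := by
  refine tendstoInMeasure_of_tendsto_ae (fun n => ?_) ?_
  · have hX : ∀ i, AEMeasurable (X i) P := fun i => (hident i).aemeasurable_fst
    fun_prop
  · filter_upwards [strong_law_ae X hint hindep hident] with ω hω
    have hB0 : Tendsto (fun n : ℕ => B ω / n) atTop (𝓝 0) :=
      tendsto_const_div_atTop_nhds_zero_nat _
    simpa [div_eq_inv_mul, mul_add] using hω.add hB0

theorem ProbabilityTheory.IndepFun.measure_setOf_mem_and_mem_le [MeasurableSpace β]
    {N : Ω → ℕ} {Y : Ω → β} (hN : Measurable N) (hNY : IndepFun N Y P) {T : Set ℕ} {E : ℕ → Set β}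
    (hE : ∀ n, MeasurableSet (E n)) {η : ℝ≥0∞} (hη : ∀ n ∈ T, P (Y ⁻¹' E n) ≤ η) :
    P {ω | N ω ∈ T ∧ Y ω ∈ E (N ω)} ≤ η * P (N ⁻¹' T) := by
  have hunion : {ω | N ω ∈ T ∧ Y ω ∈ E (N ω)} = ⋃ n : T, N ⁻¹' {(n : ℕ)} ∩ Y ⁻¹' E n := by
    ext ω
    simp
  calc P {ω | N ω ∈ T ∧ Y ω ∈ E (N ω)}
      ≤ ∑' n : T, P (N ⁻¹' {(n : ℕ)} ∩ Y ⁻¹' E n) := hunion ▸ measure_iUnion_le _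
    _ = ∑' n : T, P (N ⁻¹' {(n : ℕ)}) * P (Y ⁻¹' E n) := by
      congr with n
      exact hNY.measure_inter_preimage_eq_mul _ _ (measurableSet_singleton _) (hE n)
    _ ≤ ∑' n : T, η * P (N ⁻¹' {(n : ℕ)}) := by
      refine ENNReal.tsum_le_tsum fun n => ?_
      rw [mul_comm]
      exact mul_le_mul_left (hη n n.2) _
    _ = η * P (N ⁻¹' T) := by
      rw [ENNReal.tsum_mul_left,
        tsum_measure_preimage_singleton T.to_countable fun n _ => hN (measurableSet_singleton n)]

theorem ENNReal.toReal_div_toReal_le {a b : ℝ≥0∞} {δ : ℝ} (hδ : 0 ≤ δ)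
    (h : a ≤ ENNReal.ofReal δ * b) : a.toReal / b.toReal ≤ δ := by
  rw [← ENNReal.toReal_div]
  exact ENNReal.toReal_le_of_le_ofReal hδ (ENNReal.div_le_of_le_mul h)

theorem tendsto_measure_deviation_div_measure_gt [IsFiniteMeasure P] [MeasurableSpace β]
    {N : Ω → ℕ} {Y : Ω → β} (hN : Measurable N) (hNY : IndepFun N Y P) {g : ℕ → β → ℝ}
    (hg : ∀ n, Measurable (g n)) {c : ℝ}
    (hconv : TendstoInMeasure P (fun n ω => g n (Y ω)) atTop fun _ => c) {ε : ℝ} (hε : 0 < ε) :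
    Tendsto (fun x : ℝ => (P {ω | x < N ω ∧ ε < |g (N ω) (Y ω) - c|}).toReal /
      (P {ω | x < N ω}).toReal) atTop (𝓝 0) := by
  refine tendsto_order.2 ⟨fun a ha => .of_forall fun x => ha.trans_le (by positivity),
    fun δ hδ => ?_⟩
  obtain ⟨n₀, hn₀⟩ := ENNReal.tendsto_atTop_zero.1 (hconv (ENNReal.ofReal ε) (by positivity))
    (ENNReal.ofReal (δ / 2)) (by positivity)
  filter_upwards [eventually_ge_atTop (n₀ : ℝ)] with x hx
  refine (ENNReal.toReal_div_toReal_le (by positivity) ?_).trans_lt (half_lt_self hδ)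
  refine hNY.measure_setOf_mem_and_mem_le hN (T := {n | x < n})
    (E := fun n => {b | ε < |g n b - c|})
    (fun n => measurableSet_lt measurable_const ((hg n).sub_const c).abs) fun n hn => ?_
  have hn₀n : n₀ ≤ n := by exact_mod_cast hx.trans (le_of_lt hn)
  refine (measure_mono fun ω hω => ?_).trans (hn₀ n hn₀n)
  rw [mem_ofPred_eq, edist_dist, Real.dist_eq]
  exact ENNReal.ofReal_le_ofReal (le_of_lt hω)

end

theorem ratio_to_one_general
    (Ω : Type*) [MeasurableSpace Ω] (P : MeasureTheory.Measure Ω)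
    [IsProbabilityMeasure P]
    (X₀ : Ω → ℕ) (hX₀ : Measurable X₀)
    (A : ℕ → Ω → ℕ)
    (B₁ : Ω → ℕ) (hB₁ : Measurable B₁)
    (hAiid : ProbabilityTheory.iIndepFun A P)
    (hAident : ∀ i, ProbabilityTheory.IdentDistrib (A i) (A 0) P P)
    (hAmean : ∫ ω, (A 0 ω : ℝ) ∂P = 1)
    (hindep : ProbabilityTheory.IndepFun X₀
      (fun ω => ((fun i => A i ω : ℕ → ℕ), B₁ ω)) P)
    (X₁ : Ω → ℕ)
    (hrec : ∀ ω, X₁ ω = (∑ i ∈ Finset.range (X₀ ω), A i ω) + B₁ ω) :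
    ∀ ε : ℝ, 0 < ε →
      Tendsto
        (fun x : ℝ =>
          (P {ω | (X₀ ω : ℝ) > x ∧ |(X₁ ω : ℝ) / (X₀ ω : ℝ) - 1| > ε}).toReal /
            (P {ω | (X₀ ω : ℝ) > x}).toReal)
        atTop (nhds 0) := by
  intro ε hε
  let g : ℕ → (ℕ → ℕ) × ℕ → ℝ := fun n p => (∑ i ∈ Finset.range n, (p.1 i : ℝ) + p.2) / n
  have hg : ∀ n, Measurable (g n) := by fun_prop
  have hcast : Measurable (fun n : ℕ => (n : ℝ)) := measurable_from_top
  have hconv : TendstoInMeasure P (fun n ω => g n ((fun i => A i ω), B₁ ω)) atTop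
      fun _ => 1 := by
    rw [← hAmean]
    exact tendstoInMeasure_sum_add_div (X := fun i ω => (A i ω : ℝ)) (B := fun ω => (B₁ ω : ℝ))
      (integrable_of_integral_eq_one hAmean)
      (fun i j hij => (hAiid.indepFun hij).comp hcast hcast) (fun i => (hAident i).comp hcast)
      (hcast.comp hB₁).aemeasurable
  convert tendsto_measure_deviation_div_measure_gt hX₀ hindep hg hconv hε using 6 with x ω
  simp [g, hrec]

/-- if `X_1 = ∑_{i=1}^{X_0} A_i + B_1` with `A_i` iid mean-one,
independent of `X_0`, and `P(X_0 > x)` is regularly varying of index `-γ`,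
`γ ∈ (0,1)`, then the conditional law of `X_1/X_0` given `X_0 > x` converges to
the point mass at `1` as `x → ∞`. -/
theorem ratio_to_one
    (γ : ℝ) (hγ : γ ∈ Set.Ioo (0 : ℝ) 1)
    (Ω : Type*) [MeasurableSpace Ω] (P : MeasureTheory.Measure Ω)
    [IsProbabilityMeasure P]
    (X₀ : Ω → ℕ) (hX₀ : Measurable X₀)
    (A : ℕ → Ω → ℕ) (hAmeas : ∀ i, Measurable (A i))
    (B₁ : Ω → ℕ) (hB₁ : Measurable B₁)
    (hAiid : ProbabilityTheory.iIndepFun A P)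
    (hAident : ∀ i, ProbabilityTheory.IdentDistrib (A i) (A 0) P P)
    (hAmean : ∫ ω, (A 0 ω : ℝ) ∂P = 1)
    (hindep : ProbabilityTheory.IndepFun X₀
      (fun ω => ((fun i => A i ω : ℕ → ℕ), B₁ ω)) P)
    (X₁ : Ω → ℕ)
    (hrec : ∀ ω, X₁ ω = (∑ i ∈ Finset.range (X₀ ω), A i ω) + B₁ ω)
    (hRV : ∀ c : ℝ, 0 < c →
      Tendsto (fun x : ℝ =>
          (P {ω | (X₀ ω : ℝ) > c * x}).toReal / (P {ω | (X₀ ω : ℝ) > x}).toReal)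
        atTop (nhds (c ^ (-γ)))) :
    ∀ ε : ℝ, 0 < ε →
      Tendsto
        (fun x : ℝ =>
          (P {ω | (X₀ ω : ℝ) > x ∧ |(X₁ ω : ℝ) / (X₀ ω : ℝ) - 1| > ε}).toReal /
            (P {ω | (X₀ ω : ℝ) > x}).toReal)
        atTop (nhds 0) :=
  ratio_to_one_general Ω P X₀ hX₀ A B₁ hB₁ hAiid hAident hAmean hindep X₁ hrec
end
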